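/- Fix a natural number r ≥ 1 and an integer δ with δ ∉ {0, 1, …, 2r−2}. With vacillating tableaux of length r and their weights defined as follows — a sequence (t_0 = ∅, t_1, …, t_{2r−1}) of partitions adding a box or staying at odd steps, removing a box or staying at even steps; weight w_m = c(ε) (box ε added) or δ − |t_m| (no change) at odd m, w_m = δ − c(ε) (box ε removed) or |t_m| (no change) at even m — the weight map is injective on the union over all shapes: if u and t are vacillating tableaux of length r (of possibly different shapes) with equal weight vectors, then u = t. In particular their shapes coincide. -/
import Mathlib


/-- A partition: a weakly decreasing, eventually zero sequence of naturals. -/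
def IsPartition (l : ℕ → ℕ) : Prop :=
  Antitone l ∧ ∃ N, ∀ i, N ≤ i → l i = 0

/-- The result of adding a box to row `i` (0-indexed). -/
def addRow (l : ℕ → ℕ) (i : ℕ) : ℕ → ℕ := Function.update l i (l i + 1)

/-- The number of boxes of a partition. -/
noncomputable def psize (l : ℕ → ℕ) : ℕ := Set.ncard {p : ℕ × ℕ | p.2 < l p.1}

/-- A vacillating tableau of shape `lam` and length `r`: a sequence
`t 0 = ∅, t 1, …, t (2r−1) = lam` of partitions such that at each odd index a
box is added or nothing changes, and at each even index `≥ 2` a box is removed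
or nothing changes.  (Entries of the sequence beyond index `2r−1` are
normalized to the empty partition.) -/
def IsVacTab (r : ℕ) (t : ℕ → ℕ → ℕ) (lam : ℕ → ℕ) : Prop :=
  (∀ m, m < 2 * r → IsPartition (t m)) ∧
  t 0 = (fun _ => 0) ∧
  t (2 * r - 1) = lam ∧
  (∀ m, m < 2 * r → m % 2 = 1 →
    (t m = t (m - 1) ∨ ∃ i, t m = addRow (t (m - 1)) i)) ∧
  (∀ m, 2 ≤ m → m < 2 * r → m % 2 = 0 →
    (t m = t (m - 1) ∨ ∃ i, t (m - 1) = addRow (t m) i)) ∧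
  (∀ m, 2 * r ≤ m → t m = fun _ => 0)

/-- `w` is the weight vector of the vacillating tableau `t` (with parameter `δ`):
at an odd step `m`, `w m` is the content of the added box, or `δ − |t m|` if
nothing changed; at an even step `m ≥ 2`, `w m` is `δ` minus the content of the
removed box, or `|t m|` if nothing changed. -/
def HasWeight (δ : ℤ) (r : ℕ) (t : ℕ → ℕ → ℕ) (w : ℕ → ℤ) : Prop :=
  ∀ m, 1 ≤ m → m < 2 * r →
    (m % 2 = 1 →
      ((t m = t (m - 1) ∧ w m = δ - psize (t m)) ∨
        ∃ i, t m = addRow (t (m - 1)) i ∧ w m = (t (m - 1) i : ℤ) - i)) ∧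
    (m % 2 = 0 →
      ((t m = t (m - 1) ∧ w m = (psize (t m) : ℤ)) ∨
        ∃ i, t (m - 1) = addRow (t m) i ∧ w m = δ - ((t m i : ℤ) - i)))

section Aux

lemma psize_zero : psize (fun _ => 0) = 0 := by
  have h : {p : ℕ × ℕ | p.2 < (fun _ => 0 : ℕ → ℕ) p.1} = ∅ := by
    ext p; simp
  rw [psize, h, Set.ncard_empty]

lemma diag_finite {l : ℕ → ℕ} (h : IsPartition l) :
    {p : ℕ × ℕ | p.2 < l p.1}.Finite := by
  obtain ⟨hm, N, hN⟩ := h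
  apply Set.Finite.subset ((Set.finite_Iio N).prod (Set.finite_Iio (l 0)))
  rintro ⟨a, b⟩ hab
  simp only [Set.mem_setOf_eq] at hab
  constructor
  · by_contra hc
    have := hN a (by simpa [Set.mem_Iio] using hc)
    omega
  · have := hm (Nat.zero_le a)
    simp only [Set.mem_Iio]
    omega

lemma diag_addRow (l : ℕ → ℕ) (i : ℕ) :
    {p : ℕ × ℕ | p.2 < addRow l i p.1}
      = insert (i, l i) {p : ℕ × ℕ | p.2 < l p.1} := by
  ext ⟨a, b⟩
  simp only [Set.mem_setOf_eq, Set.mem_insert_iff, addRow, Function.update_apply,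
    Prod.mk.injEq]
  by_cases h : a = i
  · subst h
    rw [if_pos rfl]
    simp only [true_and]
    omega
  · simp [h]

lemma psize_addRow {l : ℕ → ℕ} (h : IsPartition l) (i : ℕ) :
    psize (addRow l i) = psize l + 1 := by
  rw [psize, psize, diag_addRow]
  exact Set.ncard_insert_of_notMem (by simp) (diag_finite h)

lemma row_le {l : ℕ → ℕ} (h : IsPartition l) (i : ℕ) : l i ≤ psize l := by
  have hsub : ↑({i} ×ˢ Finset.range (l i)) ⊆ {p : ℕ × ℕ | p.2 < l p.1} := by
    rintro ⟨a, b⟩ hab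
    simp only [Finset.coe_product, Set.mem_prod, Finset.coe_singleton,
      Set.mem_singleton_iff, Finset.coe_range, Set.mem_Iio] at hab
    obtain ⟨rfl, hb⟩ := hab
    exact hb
  calc l i = ({i} ×ˢ Finset.range (l i)).card := by simp
    _ = (↑({i} ×ˢ Finset.range (l i)) : Set (ℕ × ℕ)).ncard :=
        (Set.ncard_coe_finset _).symm
    _ ≤ _ := Set.ncard_le_ncard hsub (diag_finite h)

lemma col_le {l : ℕ → ℕ} (h : IsPartition l) (k : ℕ)
    (hk : ∀ j, j < k → 1 ≤ l j) : k ≤ psize l := by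
  have hsub : ↑(Finset.range k ×ˢ ({0} : Finset ℕ)) ⊆ {p : ℕ × ℕ | p.2 < l p.1} := by
    rintro ⟨a, b⟩ hab
    simp only [Finset.coe_product, Set.mem_prod, Finset.coe_range, Set.mem_Iio,
      Finset.coe_singleton, Set.mem_singleton_iff] at hab
    obtain ⟨ha, rfl⟩ := hab
    exact hk a ha
  calc k = (Finset.range k ×ˢ ({0} : Finset ℕ)).card := by simp
    _ = (↑(Finset.range k ×ˢ ({0} : Finset ℕ)) : Set (ℕ × ℕ)).ncard :=
        (Set.ncard_coe_finset _).symm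
    _ ≤ _ := Set.ncard_le_ncard hsub (diag_finite h)

lemma content_inj {p : ℕ → ℕ} (hm : Antitone p) {i i' : ℕ}
    (h : (p i : ℤ) - i = (p i' : ℤ) - i') : i = i' := by
  rcases lt_trichotomy i i' with h' | h' | h'
  · have := hm h'.le; omega
  · exact h'
  · have := hm h'.le; omega

lemma addRow_apply_self (l : ℕ → ℕ) (i : ℕ) : addRow l i i = l i + 1 := by
  simp [addRow]

lemma addRow_apply_ne (l : ℕ → ℕ) {i j : ℕ} (h : j ≠ i) : addRow l i j = l j := by
  simp [addRow, Function.update_apply, h]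

lemma addRow_inj {a b : ℕ → ℕ} {i : ℕ} (h : addRow a i = addRow b i) : a = b := by
  funext j
  have hj := congrFun h j
  by_cases hji : j = i
  · subst hji
    rw [addRow_apply_self, addRow_apply_self] at hj
    omega
  · rwa [addRow_apply_ne _ hji, addRow_apply_ne _ hji] at hj

lemma vac_size {r : ℕ} {t : ℕ → ℕ → ℕ} {lam : ℕ → ℕ} (ht : IsVacTab r t lam) :
    ∀ m, m < 2 * r → 2 * psize (t m) ≤ m + m % 2 := by
  intro m
  induction m using Nat.strong_induction_on with
  | _ m ih =>
    intro hm
    rcases Nat.eq_zero_or_pos m with rfl | hm1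
    · rw [ht.2.1, psize_zero]
    · have hp : IsPartition (t (m - 1)) := ht.1 _ (by omega)
      have ihm := ih (m - 1) (by omega) (by omega)
      rcases Nat.mod_two_eq_zero_or_one m with hpar | hpar
      · rcases ht.2.2.2.2.1 m (by omega) hm hpar with hs | ⟨i, hi⟩
        · rw [hs]; omega
        · have hq : IsPartition (t m) := ht.1 m hm
          have h2 := psize_addRow hq i
          rw [← hi] at h2
          omega
      · rcases ht.2.2.2.1 m hm hpar with hs | ⟨i, hi⟩
        · rw [hs]; omega
        · rw [hi, psize_addRow hp]; omega

lemma generic_absurd {δ : ℤ} {r : ℕ} (hr : 1 ≤ r)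
    (hδ : ∀ j : ℕ, j ≤ 2 * r - 2 → δ ≠ (j : ℤ))
    (h0 : 0 ≤ δ) (h1 : δ ≤ 2 * (r : ℤ) - 2) : False := by
  lift δ to ℕ using h0 with j
  have : (j : ℤ) ≤ 2 * (r : ℤ) - 2 := h1
  exact hδ j (by omega) rfl

end Aux

/-- Semisimplicity criterion (combinatorial core): if `δ ∉ {0,…,2r−2}`, then
the weight map is injective on the set of all vacillating tableaux of length
`r`: two tableaux (of possibly different shapes) with equal weight vectors are
equal; in particular their shapes coincide. -/
theorem weight_injective_of_generic_parameter (δ : ℤ) (r : ℕ) (hr : 1 ≤ r)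
    (hδ : ∀ j : ℕ, j ≤ 2 * r - 2 → δ ≠ (j : ℤ))
    (lam1 lam2 : ℕ → ℕ) (h1 : IsPartition lam1) (h2 : IsPartition lam2)
    (u t : ℕ → ℕ → ℕ) (w : ℕ → ℤ)
    (hu : IsVacTab r u lam1) (ht : IsVacTab r t lam2)
    (huw : HasWeight δ r u w) (htw : HasWeight δ r t w) :
    u = t ∧ lam1 = lam2 := by
  have key : ∀ m, m < 2 * r → u m = t m := by
    intro m
    induction m using Nat.strong_induction_on with
    | _ m ih =>
      intro hm
      rcases Nat.eq_zero_or_pos m with rfl | hm1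
      · rw [hu.2.1, ht.2.1]
      · have hprev : u (m - 1) = t (m - 1) := ih (m - 1) (by omega) (by omega)
        have hp : IsPartition (t (m - 1)) := ht.1 _ (by omega)
        have hsz : 2 * psize (t (m - 1)) ≤ (m - 1) + (m - 1) % 2 :=
          vac_size ht _ (by omega)
        have hupart : IsPartition (u m) := hu.1 m hm
        have htpart : IsPartition (t m) := ht.1 m hm
        obtain ⟨huo, hue⟩ := huw m hm1 hm
        obtain ⟨hto, hte⟩ := htw m hm1 hm
        clear ih huw htw h1 h2
        rcases Nat.mod_two_eq_zero_or_one m with hpar | hpar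
        · -- even step
          have hcu := hue hpar
          have hct := hte hpar
          clear huo hue hto hte
          rcases hcu with ⟨hus, huww⟩ | ⟨i, hui, huww⟩
          · rcases hct with ⟨hts, htww⟩ | ⟨i', hti, htww⟩
            · rw [hus, hts, hprev]
            · -- u stays, t removes: contradiction
              exfalso
              have hpi : t (m - 1) i' = t m i' + 1 := by
                rw [hti, addRow_apply_self]
              have hrow : t (m - 1) i' ≤ psize (t (m - 1)) := row_le hp i'
              have hcol : i' + 1 ≤ psize (t (m - 1)) := by
                refine col_le hp (i' + 1) (fun j hj => ?_)
                have := hp.1 (show j ≤ i' by omega)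
                omega
              have hsz2 : psize (u m) = psize (t (m - 1)) := by rw [hus, hprev]
              clear hus hti hprev hp hupart htpart hu ht
              exact generic_absurd hr hδ (by omega) (by omega)
          · rcases hct with ⟨hts, htww⟩ | ⟨i', hti, htww⟩
            · -- u removes, t stays: contradiction
              exfalso
              have hui' : t (m - 1) = addRow (u m) i := by rw [← hprev]; exact hui
              have hpi : t (m - 1) i = u m i + 1 := by
                rw [hui', addRow_apply_self]
              have hrow : t (m - 1) i ≤ psize (t (m - 1)) := row_le hp i
              have hcol : i + 1 ≤ psize (t (m - 1)) := by
                refine col_le hp (i + 1) (fun j hj => ?_)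
                have := hp.1 (show j ≤ i by omega)
                omega
              have hsz2 : psize (t m) = psize (t (m - 1)) := by rw [hts]
              clear hts hui hui' hprev hp hupart htpart hu ht
              exact generic_absurd hr hδ (by omega) (by omega)
            · -- both remove
              have hui' : t (m - 1) = addRow (u m) i := by rw [← hprev]; exact hui
              have e1 : t (m - 1) i = u m i + 1 := by rw [hui', addRow_apply_self]
              have e2 : t (m - 1) i' = t m i' + 1 := by rw [hti, addRow_apply_self]
              have hc : (t (m - 1) i : ℤ) - i = (t (m - 1) i' : ℤ) - i' := by omega
              have hii : i = i' := content_inj hp.1 hc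
              subst hii
              exact addRow_inj (hui'.symm.trans hti)
        · -- odd step
          have hcu := huo hpar
          have hct := hto hpar
          clear huo hue hto hte
          rcases hcu with ⟨hus, huww⟩ | ⟨i, hui, huww⟩
          · rcases hct with ⟨hts, htww⟩ | ⟨i', hti, htww⟩
            · rw [hus, hts, hprev]
            · -- u stays, t adds: contradiction
              exfalso
              have hrow : t (m - 1) i' ≤ psize (t (m - 1)) := row_le hp i'
              have hcol : i' ≤ psize (t (m - 1)) := by
                refine col_le hp i' (fun j hj => ?_)
                have h2 : addRow (t (m - 1)) i' i' ≤ addRow (t (m - 1)) i' j := by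
                  rw [← hti]; exact htpart.1 hj.le
                rw [addRow_apply_self, addRow_apply_ne _ hj.ne] at h2
                omega
              have hsz2 : psize (u m) = psize (t (m - 1)) := by rw [hus, hprev]
              clear hus hti hprev hp hupart htpart hu ht
              exact generic_absurd hr hδ (by omega) (by omega)
          · rcases hct with ⟨hts, htww⟩ | ⟨i', hti, htww⟩
            · -- u adds, t stays: contradiction
              exfalso
              have hui' : u m = addRow (t (m - 1)) i := by rw [hprev] at hui; exact hui
              have hrow : t (m - 1) i ≤ psize (t (m - 1)) := row_le hp i
              have hcol : i ≤ psize (t (m - 1)) := by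
                refine col_le hp i (fun j hj => ?_)
                have h2 : addRow (t (m - 1)) i i ≤ addRow (t (m - 1)) i j := by
                  rw [← hui']; exact hupart.1 hj.le
                rw [addRow_apply_self, addRow_apply_ne _ hj.ne] at h2
                omega
              have hsz2 : psize (t m) = psize (t (m - 1)) := by rw [hts]
              have huww' : w m = (t (m - 1) i : ℤ) - i := by rw [hprev] at huww; exact huww
              clear hts hui hui' hprev hp hupart htpart hu ht huww
              exact generic_absurd hr hδ (by omega) (by omega)
            · -- both add
              rw [hprev] at hui huww
              have hc : (t (m - 1) i : ℤ) - i = (t (m - 1) i' : ℤ) - i' := by omega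
              have hii : i = i' := content_inj hp.1 hc
              subst hii
              rw [hui, hti]
  have hut : u = t := by
    funext m
    rcases lt_or_ge m (2 * r) with h | h
    · exact key m h
    · rw [hu.2.2.2.2.2 m h, ht.2.2.2.2.2 m h]
  refine ⟨hut, ?_⟩
  rw [← hu.2.2.1, ← ht.2.2.1]
  exact key (2 * r - 1) (by omega)
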